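/- arXiv:1207.3026 — 2 statements merged into one kernel-verified Lean document; each statement's English description precedes it below -/
import Mathlib

section
/- Let p ≥ 0 be an integer. There exist constants c_p > 0 and C_p > 0, depending only on p, such that c_p Σ_{k=0}^{p} d_k² ≤ Q(d) ≤ C_p Σ_{k=0}^{p} d_k² for every d = (d_0, …, d_p) ∈ ℝ^{p+1}. In particular, Q(d) is bounded by a constant if and only if every component |d_k| is bounded by a constant. -/
open MeasureTheory Polynomial Set Function

noncomputable def gp (p : ℕ) (a : Fin (p+1) → ℝ) (ξ : ℝ) : ℝ :=
  ∑ k : Fin (p+1), a k * ξ ^ (k : ℕ)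

lemma gp_cont (p : ℕ) (a : Fin (p+1) → ℝ) : Continuous (gp p a) := by
  unfold gp; fun_prop

lemma gp_int_sq_pos (p : ℕ) {a b : ℝ} (hab : a < b) {u : Fin (p+1) → ℝ} (hu : u ≠ 0) :
    0 < ∫ ξ in a..b, (gp p u ξ)^2 := by
  set P : Polynomial ℝ := ∑ k : Fin (p+1), C (u k) * X ^ (k : ℕ) with hP
  have heval : ∀ ξ, P.eval ξ = gp p u ξ := by
    intro ξ; simp [hP, gp, eval_finset_sum]
  have hPne : P ≠ 0 := by
    intro h0
    apply hu
    funext k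
    have : P.coeff (k : ℕ) = u k := by
      simp only [hP, finset_sum_coeff, coeff_C_mul, coeff_X_pow]
      rw [Finset.sum_eq_single k]
      · simp
      · intro j _ hj
        have : ¬ ((k : ℕ) = (j : ℕ)) := fun h => hj (Fin.ext h).symm
        simp [this]
      · simp
    rw [h0] at this
    simpa using this.symm
  have hroots : {x : ℝ | P.IsRoot x}.Finite := by
    by_contra h
    exact hPne (P.eq_zero_of_infinite_isRoot h)
  rw [intervalIntegral.integral_pos_iff_support_of_nonneg_ae
    (Filter.Eventually.of_forall fun ξ => sq_nonneg _)
    (((gp_cont p u).pow 2).intervalIntegrable a b)]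
  refine ⟨hab, ?_⟩
  have hsub : Ioc a b ⊆ (support fun ξ => (gp p u ξ)^2) ∪ {x : ℝ | P.IsRoot x} := by
    intro ξ hξ
    by_cases h : gp p u ξ = 0
    · right; simp [IsRoot, heval, h]
    · left; simp [Function.support, pow_eq_zero_iff, h]
  have h1 : volume (Ioc a b) ≤ volume ((support fun ξ => (gp p u ξ)^2) ∩ Ioc a b)
      + volume {x : ℝ | P.IsRoot x} := by
    calc volume (Ioc a b)
        ≤ volume (((support fun ξ => (gp p u ξ)^2) ∩ Ioc a b) ∪ {x : ℝ | P.IsRoot x}) := by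
          apply measure_mono
          intro ξ hξ
          rcases hsub hξ with h | h
          · exact Or.inl ⟨h, hξ⟩
          · exact Or.inr h
      _ ≤ _ := measure_union_le _ _
  rw [hroots.measure_zero volume, add_zero] at h1
  refine lt_of_lt_of_le ?_ h1
  rw [Real.volume_Ioc]
  exact ENNReal.ofReal_pos.mpr (by linarith)

/-- `fd p d ξ = (1/2) Σ_{k=0}^p (d_k/k!) ξ^k`. -/
noncomputable def fd (p : ℕ) (d : Fin (p+1) → ℝ) (ξ : ℝ) : ℝ :=
  (1/2) * ∑ k : Fin (p+1), d k / (Nat.factorial k) * ξ ^ (k : ℕ)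

lemma fd_eq_gp (p : ℕ) (d : Fin (p+1) → ℝ) (ξ : ℝ) :
    fd p d ξ = gp p (fun k => d k / (2 * Nat.factorial k)) ξ := by
  simp only [fd, gp, Finset.mul_sum]
  refine Finset.sum_congr rfl fun k _ => by ring

lemma gp_add (p : ℕ) (a b : Fin (p+1) → ℝ) (ξ : ℝ) :
    gp p a ξ + gp p b ξ = gp p (a + b) ξ := by
  simp only [gp, Pi.add_apply, ← Finset.sum_add_distrib, add_mul]

lemma gp_sub (p : ℕ) (a b : Fin (p+1) → ℝ) (ξ : ℝ) :
    gp p a ξ - gp p b ξ = gp p (a - b) ξ := by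
  simp only [gp, Pi.sub_apply, ← Finset.sum_sub_distrib, sub_mul]

lemma gp_smul (p : ℕ) (t : ℝ) (a : Fin (p+1) → ℝ) (ξ : ℝ) :
    gp p (t • a) ξ = t * gp p a ξ := by
  simp only [gp, Pi.smul_apply, smul_eq_mul, Finset.mul_sum]
  refine Finset.sum_congr rfl fun k _ => by ring

lemma fd_smul (p : ℕ) (t : ℝ) (d : Fin (p+1) → ℝ) (ξ : ℝ) :
    fd p (t • d) ξ = t * fd p d ξ := by
  simp only [fd, Pi.smul_apply, smul_eq_mul, Finset.mul_sum]
  refine Finset.sum_congr rfl fun k _ => by ring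

lemma fd_cont (p : ℕ) (d : Fin (p+1) → ℝ) : Continuous (fd p d) := by
  unfold fd; fun_prop

noncomputable def FF (p : ℕ) (x : (Fin (p+1) → ℝ) × (Fin (p+1) → ℝ)) : ℝ :=
  (∫ ξ in (-(1:ℝ)/2)..0, (gp p x.1 ξ + fd p x.2 ξ)^2) +
  (∫ ξ in (0:ℝ)..(1/2), (gp p x.1 ξ - fd p x.2 ξ)^2)

lemma FF_nonneg (p : ℕ) (x : (Fin (p+1) → ℝ) × (Fin (p+1) → ℝ)) : 0 ≤ FF p x := by
  have h1 : 0 ≤ ∫ ξ in (-(1:ℝ)/2)..0, (gp p x.1 ξ + fd p x.2 ξ)^2 :=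
    intervalIntegral.integral_nonneg (by norm_num) (fun u _ => sq_nonneg _)
  have h2 : 0 ≤ ∫ ξ in (0:ℝ)..(1/2), (gp p x.1 ξ - fd p x.2 ξ)^2 :=
    intervalIntegral.integral_nonneg (by norm_num) (fun u _ => sq_nonneg _)
  exact add_nonneg h1 h2

lemma FF_pos (p : ℕ) {x : (Fin (p+1) → ℝ) × (Fin (p+1) → ℝ)} (hx : x ≠ 0) : 0 < FF p x := by
  set u1 : Fin (p+1) → ℝ := x.1 + fun k => x.2 k / (2 * Nat.factorial k) with hu1
  set u2 : Fin (p+1) → ℝ := x.1 - fun k => x.2 k / (2 * Nat.factorial k) with hu2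
  have e1 : ∀ ξ, gp p x.1 ξ + fd p x.2 ξ = gp p u1 ξ := fun ξ => by
    rw [fd_eq_gp, gp_add]
  have e2 : ∀ ξ, gp p x.1 ξ - fd p x.2 ξ = gp p u2 ξ := fun ξ => by
    rw [fd_eq_gp, gp_sub]
  by_cases h1 : u1 = 0
  · by_cases h2 : u2 = 0
    · exfalso
      apply hx
      have hfac : ∀ k : Fin (p+1), (2 * (Nat.factorial k : ℝ)) ≠ 0 := fun k => by
        positivity
      have hx1 : x.1 = 0 := by
        funext k
        have a1 := congrFun h1 k
        have a2 := congrFun h2 k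
        simp [hu1, hu2] at a1 a2
        simp only [Pi.zero_apply]
        linarith
      have hx2 : x.2 = 0 := by
        funext k
        have a1 := congrFun h1 k
        have a2 := congrFun h2 k
        simp [hu1, hu2] at a1 a2
        simp only [Pi.zero_apply]
        have : x.2 k / (2 * Nat.factorial k) = 0 := by linarith
        have := (div_eq_zero_iff.mp this).resolve_right (hfac k)
        simpa using this
      exact Prod.ext hx1 hx2
    · have hpos : 0 < ∫ ξ in (0:ℝ)..(1/2), (gp p x.1 ξ - fd p x.2 ξ)^2 := by
        simp only [e2]
        exact gp_int_sq_pos p (by norm_num) h2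
      have h1' : 0 ≤ ∫ ξ in (-(1:ℝ)/2)..0, (gp p x.1 ξ + fd p x.2 ξ)^2 :=
        intervalIntegral.integral_nonneg (by norm_num) (fun u _ => sq_nonneg _)
      unfold FF; linarith
  · have hpos : 0 < ∫ ξ in (-(1:ℝ)/2)..0, (gp p x.1 ξ + fd p x.2 ξ)^2 := by
      simp only [e1]
      exact gp_int_sq_pos p (by norm_num) h1
    have h2' : 0 ≤ ∫ ξ in (0:ℝ)..(1/2), (gp p x.1 ξ - fd p x.2 ξ)^2 :=
      intervalIntegral.integral_nonneg (by norm_num) (fun u _ => sq_nonneg _)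
    unfold FF; linarith

lemma gp_cont2 (p : ℕ) :
    Continuous (fun q : ((Fin (p+1) → ℝ) × (Fin (p+1) → ℝ)) × ℝ => gp p q.1.1 q.2) := by
  unfold gp
  apply continuous_finset_sum
  intro k _
  exact ((continuous_apply k).comp (continuous_fst.comp continuous_fst)).mul (continuous_snd.pow _)

lemma fd_cont2 (p : ℕ) :
    Continuous (fun q : ((Fin (p+1) → ℝ) × (Fin (p+1) → ℝ)) × ℝ => fd p q.1.2 q.2) := by
  unfold fd
  apply Continuous.mul continuous_const
  apply continuous_finset_sum
  intro k _
  exact (((continuous_apply k).comp (continuous_snd.comp continuous_fst)).div_const _).mul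
    (continuous_snd.pow _)

lemma FF_cont (p : ℕ) : Continuous (FF p) := by
  unfold FF
  have h1 : Continuous (Function.uncurry
      (fun (x : (Fin (p+1) → ℝ) × (Fin (p+1) → ℝ)) (ξ : ℝ) => (gp p x.1 ξ + fd p x.2 ξ)^2)) :=
    ((gp_cont2 p).add (fd_cont2 p)).pow 2
  have h2 : Continuous (Function.uncurry
      (fun (x : (Fin (p+1) → ℝ) × (Fin (p+1) → ℝ)) (ξ : ℝ) => (gp p x.1 ξ - fd p x.2 ξ)^2)) :=
    ((gp_cont2 p).sub (fd_cont2 p)).pow 2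
  exact (intervalIntegral.continuous_parametric_intervalIntegral_of_continuous' h1 (-1/2) 0).add
    (intervalIntegral.continuous_parametric_intervalIntegral_of_continuous' h2 0 (1/2))

lemma FF_smul (p : ℕ) (t : ℝ) (x : (Fin (p+1) → ℝ) × (Fin (p+1) → ℝ)) :
    FF p (t • x) = t^2 * FF p x := by
  have e1 : ∀ ξ : ℝ, (gp p (t • x).1 ξ + fd p (t • x).2 ξ)^2
      = t^2 * (gp p x.1 ξ + fd p x.2 ξ)^2 := by
    intro ξ
    rw [Prod.smul_fst, Prod.smul_snd, gp_smul, fd_smul]; ring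
  have e2 : ∀ ξ : ℝ, (gp p (t • x).1 ξ - fd p (t • x).2 ξ)^2
      = t^2 * (gp p x.1 ξ - fd p x.2 ξ)^2 := by
    intro ξ
    rw [Prod.smul_fst, Prod.smul_snd, gp_smul, fd_smul]; ring
  unfold FF
  simp only [e1, e2, intervalIntegral.integral_const_mul]
  ring

noncomputable def NN (p : ℕ) (x : (Fin (p+1) → ℝ) × (Fin (p+1) → ℝ)) : ℝ :=
  (∑ k : Fin (p+1), (x.1 k)^2) + ∑ k : Fin (p+1), (x.2 k)^2

lemma NN_nonneg (p : ℕ) (x) : 0 ≤ NN p x :=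
  add_nonneg (Finset.sum_nonneg fun _ _ => sq_nonneg _) (Finset.sum_nonneg fun _ _ => sq_nonneg _)

lemma NN_smul (p : ℕ) (t : ℝ) (x) : NN p (t • x) = t^2 * NN p x := by
  unfold NN
  simp only [Prod.smul_fst, Prod.smul_snd, Pi.smul_apply, smul_eq_mul, mul_pow, mul_add,
    Finset.mul_sum]

lemma NN_cont (p : ℕ) : Continuous (NN p) := by
  unfold NN
  apply Continuous.add <;>
  · apply continuous_finset_sum
    intro k _
    first
    | exact ((continuous_apply k).comp continuous_fst).pow 2
    | exact ((continuous_apply k).comp continuous_snd).pow 2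

lemma FF_lower (p : ℕ) : ∃ c : ℝ, 0 < c ∧ ∀ x, c * NN p x ≤ FF p x := by
  set K : Set ((Fin (p+1) → ℝ) × (Fin (p+1) → ℝ)) := {x | NN p x = 1} with hK
  have hclosed : IsClosed K := isClosed_eq (NN_cont p) continuous_const
  have hsubset : K ⊆ Metric.closedBall 0 1 := by
    intro x hx
    rw [Metric.mem_closedBall, dist_zero_right]
    have hbd : ∀ (y : Fin (p+1) → ℝ), (∑ k : Fin (p+1), (y k)^2) ≤ 1 → ‖y‖ ≤ 1 := by
      intro y hy
      rw [pi_norm_le_iff_of_nonneg zero_le_one]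
      intro k
      rw [Real.norm_eq_abs]
      refine (sq_le_one_iff_abs_le_one (y k)).mp ?_
      calc (y k)^2 ≤ ∑ j : Fin (p+1), (y j)^2 :=
            Finset.single_le_sum (f := fun j => (y j)^2) (fun j _ => sq_nonneg _)
              (Finset.mem_univ k)
        _ ≤ 1 := hy

    have h1 : (∑ k : Fin (p+1), (x.1 k)^2) ≤ 1 := by
      have := hx
      simp only [hK, Set.mem_setOf_eq, NN] at this
      nlinarith [Finset.sum_nonneg (fun k (_ : k ∈ Finset.univ) => sq_nonneg (x.2 k))]
    have h2 : (∑ k : Fin (p+1), (x.2 k)^2) ≤ 1 := by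
      have := hx
      simp only [hK, Set.mem_setOf_eq, NN] at this
      nlinarith [Finset.sum_nonneg (fun k (_ : k ∈ Finset.univ) => sq_nonneg (x.1 k))]
    rw [Prod.norm_def]
    exact max_le (hbd _ h1) (hbd _ h2)
  have hcompact : IsCompact K :=
    (isCompact_closedBall (0 : (Fin (p+1) → ℝ) × (Fin (p+1) → ℝ)) 1).of_isClosed_subset
      hclosed hsubset
  have hne : K.Nonempty := by
    refine ⟨((fun k => if k = 0 then 1 else 0), 0), ?_⟩
    simp only [hK, Set.mem_setOf_eq, NN]
    rw [Finset.sum_congr rfl (fun k _ => by rw [show ((if k = 0 then (1:ℝ) else 0))^2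
      = if k = 0 then 1 else 0 by split <;> norm_num])]
    simp
  obtain ⟨x₀, hx₀K, hmin⟩ := hcompact.exists_isMinOn hne (FF_cont p).continuousOn
  have hx₀ne : x₀ ≠ 0 := by
    intro h
    have : NN p x₀ = 1 := hx₀K
    rw [h] at this
    simp [NN] at this
  refine ⟨FF p x₀, FF_pos p hx₀ne, ?_⟩
  intro x
  rcases eq_or_lt_of_le (NN_nonneg p x) with h0 | hpos
  · rw [← h0, mul_zero]
    exact FF_nonneg p x
  · set s := Real.sqrt (NN p x) with hs
    have hspos : 0 < s := Real.sqrt_pos.mpr hpos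
    have hs2 : s^2 = NN p x := Real.sq_sqrt hpos.le
    set y := s⁻¹ • x with hy
    have hyK : y ∈ K := by
      simp only [hK, Set.mem_setOf_eq, hy, NN_smul]
      field_simp
      rw [hs2]
    have hxy : x = s • y := by
      rw [hy, smul_smul, mul_inv_cancel₀ hspos.ne', one_smul]
    have hmy : FF p x₀ ≤ FF p y := hmin hyK
    have hFFx : FF p x = s^2 * FF p y := by
      conv_lhs => rw [hxy]
      rw [FF_smul]
    calc FF p x₀ * NN p x = s^2 * FF p x₀ := by rw [← hs2]; ring
      _ ≤ s^2 * FF p y := mul_le_mul_of_nonneg_left hmy (sq_nonneg s)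
      _ = FF p x := hFFx.symm

/-- The error functional whose infimum over polynomials of degree ≤ p defines `Qform`. -/
noncomputable def Qerr (p : ℕ) (d : Fin (p+1) → ℝ) (v : Polynomial ℝ) : ℝ :=
  (∫ ξ in (-(1:ℝ)/2)..0, (v.eval ξ + fd p d ξ)^2) +
  (∫ ξ in (0:ℝ)..(1/2), (v.eval ξ - fd p d ξ)^2)

/-- `Q(d) = inf_{v ∈ P} Qerr p d v`. -/
noncomputable def Qform (p : ℕ) (d : Fin (p+1) → ℝ) : ℝ :=
  sInf {q : ℝ | ∃ v : Polynomial ℝ, v.natDegree ≤ p ∧ q = Qerr p d v}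

lemma Qerr_nonneg (p : ℕ) (d : Fin (p+1) → ℝ) (v : Polynomial ℝ) : 0 ≤ Qerr p d v := by
  have h1 : 0 ≤ ∫ ξ in (-(1:ℝ)/2)..0, (v.eval ξ + fd p d ξ)^2 :=
    intervalIntegral.integral_nonneg (by norm_num) (fun u _ => sq_nonneg _)
  have h2 : 0 ≤ ∫ ξ in (0:ℝ)..(1/2), (v.eval ξ - fd p d ξ)^2 :=
    intervalIntegral.integral_nonneg (by norm_num) (fun u _ => sq_nonneg _)
  unfold Qerr; linarith

lemma Qerr_eq_FF (p : ℕ) (d : Fin (p+1) → ℝ) {v : Polynomial ℝ} (hv : v.natDegree ≤ p) :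
    Qerr p d v = FF p ((fun k : Fin (p+1) => v.coeff k), d) := by
  have heval : ∀ ξ : ℝ, v.eval ξ = gp p (fun k : Fin (p+1) => v.coeff k) ξ := by
    intro ξ
    rw [Polynomial.eval_eq_sum_range' (Nat.lt_succ_of_le hv), gp,
      Fin.sum_univ_eq_sum_range (fun i => v.coeff i * ξ ^ i)]
  unfold Qerr FF
  simp only [heval]

lemma fd_sq_le (p : ℕ) (d : Fin (p+1) → ℝ) {ξ : ℝ} (hξ : |ξ| ≤ 1) :
    (fd p d ξ)^2 ≤ ((p:ℝ)+1)/4 * ∑ k : Fin (p+1), (d k)^2 := by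
  have hterm : ∀ k : Fin (p+1), (d k / (Nat.factorial (k:ℕ)) * ξ^(k:ℕ))^2 ≤ (d k)^2 := by
    intro k
    have hfac : (1:ℝ) ≤ |((Nat.factorial (k:ℕ) : ℕ) : ℝ)| := by
      rw [abs_of_pos (by positivity)]
      exact_mod_cast Nat.one_le_iff_ne_zero.mpr (Nat.factorial_ne_zero _)
    have hpow : |ξ|^(k:ℕ) ≤ 1 := pow_le_one₀ (abs_nonneg _) hξ
    have h1 : |d k / (Nat.factorial (k:ℕ)) * ξ^(k:ℕ)| ≤ |d k| := by
      rw [abs_mul, abs_div, abs_pow]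
      calc |d k| / |((Nat.factorial (k:ℕ) : ℕ) : ℝ)| * |ξ|^(k:ℕ)
          ≤ |d k| * 1 := mul_le_mul (div_le_self (abs_nonneg _) hfac) hpow
            (pow_nonneg (abs_nonneg _) _) (abs_nonneg _)
        _ = |d k| := mul_one _
    calc (d k / (Nat.factorial (k:ℕ)) * ξ^(k:ℕ))^2
        = |d k / (Nat.factorial (k:ℕ)) * ξ^(k:ℕ)|^2 := (sq_abs _).symm
      _ ≤ |d k|^2 := pow_le_pow_left₀ (abs_nonneg _) h1 2
      _ = (d k)^2 := sq_abs _
  have hsum : (∑ k : Fin (p+1), d k / (Nat.factorial (k:ℕ)) * ξ^(k:ℕ))^2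
      ≤ ((p:ℝ)+1) * ∑ k : Fin (p+1), (d k)^2 := by
    calc (∑ k : Fin (p+1), d k / (Nat.factorial (k:ℕ)) * ξ^(k:ℕ))^2
        ≤ (Finset.univ.card : ℝ) * ∑ k : Fin (p+1), (d k / (Nat.factorial (k:ℕ)) * ξ^(k:ℕ))^2 :=
          sq_sum_le_card_mul_sum_sq
      _ ≤ ((p:ℝ)+1) * ∑ k : Fin (p+1), (d k)^2 := by
          rw [Finset.card_univ, Fintype.card_fin]
          push_cast
          exact mul_le_mul_of_nonneg_left (Finset.sum_le_sum fun k _ => hterm k)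
            (by positivity)
  unfold fd
  rw [mul_pow]
  nlinarith [hsum]

lemma Qerr_zero_le (p : ℕ) (d : Fin (p+1) → ℝ) :
    Qerr p d 0 ≤ ((p:ℝ)+1)/4 * ∑ k : Fin (p+1), (d k)^2 := by
  set B : ℝ := ((p:ℝ)+1)/4 * ∑ k : Fin (p+1), (d k)^2 with hB
  have hc : Continuous fun ξ => (fd p d ξ)^2 := (fd_cont p d).pow 2
  have i1 : (∫ ξ in (-(1:ℝ)/2)..0, (fd p d ξ)^2) ≤ ∫ _ξ in (-(1:ℝ)/2)..0, B := by
    apply intervalIntegral.integral_mono_on (by norm_num)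
      (hc.intervalIntegrable _ _) intervalIntegrable_const
    intro ξ hξ
    exact fd_sq_le p d (abs_le.mpr ⟨by linarith [hξ.1], by linarith [hξ.2]⟩)
  have i2 : (∫ ξ in (0:ℝ)..(1/2), (fd p d ξ)^2) ≤ ∫ _ξ in (0:ℝ)..(1/2), B := by
    apply intervalIntegral.integral_mono_on (by norm_num)
      (hc.intervalIntegrable _ _) intervalIntegrable_const
    intro ξ hξ
    exact fd_sq_le p d (abs_le.mpr ⟨by linarith [hξ.1], by linarith [hξ.2]⟩)
  have e1 : (∫ _ξ in (-(1:ℝ)/2)..0, B) = (1/2) * B := by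
    simp [intervalIntegral.integral_const]; ring
  have e2 : (∫ _ξ in (0:ℝ)..(1/2), B) = (1/2) * B := by
    simp [intervalIntegral.integral_const]
  have hQ : Qerr p d 0 = (∫ ξ in (-(1:ℝ)/2)..0, (fd p d ξ)^2)
      + ∫ ξ in (0:ℝ)..(1/2), (fd p d ξ)^2 := by
    unfold Qerr
    simp
  rw [hQ]
  rw [e1] at i1; rw [e2] at i2
  linarith

/-- two-sided equivalence of `Q(d)` with the Euclidean norm squared:
`c_p Σ d_k² ≤ Q(d) ≤ C_p Σ d_k²` with constants depending only on `p`. -/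
theorem Qform_equiv_euclidean (p : ℕ) :
    ∃ c C : ℝ, 0 < c ∧ 0 < C ∧
      ∀ d : Fin (p+1) → ℝ,
        c * (∑ k : Fin (p+1), (d k)^2) ≤ Qform p d ∧
        Qform p d ≤ C * (∑ k : Fin (p+1), (d k)^2) := by
  obtain ⟨c, hc, hcl⟩ := FF_lower p
  refine ⟨c, ((p:ℝ)+1)/4, hc, by positivity, fun d => ⟨?_, ?_⟩⟩
  · have hne : {q : ℝ | ∃ v : Polynomial ℝ, v.natDegree ≤ p ∧ q = Qerr p d v}.Nonempty :=
      ⟨Qerr p d 0, 0, by simp, rfl⟩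
    unfold Qform
    apply le_csInf hne
    rintro q ⟨v, hv, rfl⟩
    rw [Qerr_eq_FF p d hv]
    refine le_trans ?_ (hcl _)
    apply mul_le_mul_of_nonneg_left _ hc.le
    unfold NN
    have : 0 ≤ ∑ k : Fin (p+1), ((fun k : Fin (p+1) => v.coeff k) k)^2 :=
      Finset.sum_nonneg fun _ _ => sq_nonneg _
    linarith
  · have hbdd : BddBelow {q : ℝ | ∃ v : Polynomial ℝ, v.natDegree ≤ p ∧ q = Qerr p d v} := by
      refine ⟨0, ?_⟩
      rintro q ⟨v, hv, rfl⟩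
      exact Qerr_nonneg p d v
    have hmem : Qerr p d 0 ∈ {q : ℝ | ∃ v : Polynomial ℝ, v.natDegree ≤ p ∧ q = Qerr p d v} :=
      ⟨0, by simp, rfl⟩
    unfold Qform
    exact le_trans (csInf_le hbdd hmem) (Qerr_zero_le p d)
end

section
/- (Necessity of numerical W^{p+1}_1-smoothness) Let p ≥ 0 be an integer. There exist constants C₁ > 0 and C₁₂ > 0 depending only on p with the following property. Let a < b, N a positive integer, h = (b−a)/N, x_i = a + i h, u : [a,b] → ℝ (p+1)-times continuously differentiable, and u^R : (a,b) → ℝ piecewise polynomial of degree at most p on the cells (x_i, x_{i+1}), with D^k_i = (u^{R(k)}(x_i⁺) − u^{R(k)}(x_i⁻)) / h^{p+1−k}. If K ≥ 0 and ∫_a^b |u − u^R| ≤ K h^{p+1}, then Σ_{i=1}^{N−1} h · √(Q(D^0_i, …, D^p_i)) ≤ (1/C₁₂) ( K + C₁ ∫_a^b |u^{(p+1)}| ). -/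
/-!
Fix an interior node `xᵢ` and any polynomial `P` of degree `≤ p`. Taking for `v` in the definition
of `Q` minus the mean of the rescaled `q_{i-1} - P` and `qᵢ - P` makes `v ± f_{Dᵢ}` equal to the
rescaled `P - q_{i-1}` and `P - qᵢ`, so `Q(Dᵢ)` is bounded by their squared `L²` norms on the two
half-cells around `xᵢ`. On polynomials of degree `≤ p` the `L²` norm on an interval of length `ℓ` is
at most `ℓ^{-1/2}` times a constant times the `L¹` norm (equivalence of norms in finite dimension,
then rescaling), so `h √Q(Dᵢ)` is bounded by `h^{-(p+1)}` times the `L¹` distance of the pieces from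
`P` on the dual cell `[xᵢ - h/2, xᵢ + h/2]`. Choosing for `P` the Taylor polynomial of `u` at `xᵢ`,
the triangle inequality and the integral form of the remainder bound this by
`h^{-(p+1)} ‖u - u^R‖_{L¹}` plus `∫ |u^{(p+1)}|` over the dual cell, and the dual cells do not
overlap.
-/

open MeasureTheory Polynomial

/-- The scaled jump vector `(D⁰,…,Dᵖ)` at a node `xi`, where `ql`/`qr` are the
polynomial pieces to the left/right of `xi`:
`Dᵏ = ((d^k/dx^k) qr(xi) - (d^k/dx^k) ql(xi)) / h^{p+1-k}`. -/
noncomputable def Dvec (p : ℕ) (h xi : ℝ) (ql qr : Polynomial ℝ) : Fin (p+1) → ℝ :=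
  fun k => ((Polynomial.derivative^[(k:ℕ)] qr).eval xi -
            (Polynomial.derivative^[(k:ℕ)] ql).eval xi) / h^(p+1-(k:ℕ))

open Set intervalIntegral
open scoped Nat

theorem Polynomial.natDegree_comp_linear_le {R : Type*} [Semiring R] (s : R[X]) (a b : R) :
    (s.comp (C a * X + C b)).natDegree ≤ s.natDegree :=
  natDegree_comp_le.trans <| by
    simpa using Nat.mul_le_mul_left s.natDegree (natDegree_linear_le (a := a) (b := b))

theorem Polynomial.natDegree_sub_le_of_natDegree_le {R : Type*} [Ring R] {s r : R[X]} {n : ℕ}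
    (hs : s.natDegree ≤ n) (hr : r.natDegree ≤ n) : (s - r).natDegree ≤ n :=
  (natDegree_sub_le_of_le hs hr).trans (max_self n).le

theorem exists_le_mul_sq_of_homogeneous {E : Type*} [NormedAddCommGroup E] [NormedSpace ℝ E]
    [FiniteDimensional ℝ E] {f g : E → ℝ} (hf : Continuous f) (hg : Continuous g)
    (hf_pos : ∀ x ≠ 0, 0 < f x) (hf_smul : ∀ (t : ℝ) x, f (t • x) = |t| * f x)
    (hg_smul : ∀ (t : ℝ) x, g (t • x) = t ^ 2 * g x) :
    ∃ C, 0 < C ∧ ∀ x, g x ≤ C * f x ^ 2 := by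
  have hS : ∀ y ∈ Metric.sphere (0 : E) 1, 0 < f y := fun y hy =>
    hf_pos y (ne_zero_of_mem_unit_sphere ⟨y, hy⟩)
  obtain ⟨M, hM⟩ := (isCompact_sphere (0 : E) 1).bddAbove_image
    (hg.continuousOn.div (hf.pow 2).continuousOn fun y hy => (pow_pos (hS y hy) 2).ne')
  refine ⟨max M 1, by positivity, fun x => ?_⟩
  rcases eq_or_ne x 0 with rfl | hx
  · rw [show g 0 = 0 by simpa using hg_smul 0 0]
    positivity
  set t := ‖x‖
  have ht : 0 < t := norm_pos_iff.2 hx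
  have hy : t⁻¹ • x ∈ Metric.sphere (0 : E) 1 := by simp [norm_smul, t, ht.ne']
  have hgy : g (t⁻¹ • x) ≤ max M 1 * f (t⁻¹ • x) ^ 2 := by
    have := hM ⟨_, hy, rfl⟩
    simp only [Pi.div_apply, Pi.pow_apply] at this
    rw [div_le_iff₀ (pow_pos (hS _ hy) 2)] at this
    exact this.trans (by gcongr; exact le_max_left M 1)
  have hx : x = t • t⁻¹ • x := by rw [smul_smul, mul_inv_cancel₀ ht.ne', one_smul]
  rw [hx, hg_smul, hf_smul, abs_of_pos ht]
  nlinarith [sq_nonneg t]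

theorem Polynomial.integral_abs_eval_pos {v : ℝ[X]} (hv : v ≠ 0) {a b : ℝ} (hab : a < b) :
    0 < ∫ x in a..b, |v.eval x| := by
  obtain ⟨c, hc, hroot⟩ := ((Icc_infinite hab).sdiff (v.finite_setOfPred_isRoot hv)).nonempty
  exact integral_pos hab (by fun_prop) (fun x _ => abs_nonneg _) ⟨c, hc, abs_pos.2 hroot⟩

theorem exists_integral_sq_le_mul_sq_unitInterval (p : ℕ) :
    ∃ C, 0 < C ∧ ∀ v : ℝ[X], v.natDegree ≤ p →
      ∫ x in (0 : ℝ)..1, v.eval x ^ 2 ≤ C * (∫ x in (0 : ℝ)..1, |v.eval x|) ^ 2 := by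
  let Φ := (degreeLTEquiv ℝ (p + 1)).symm
  have hΦ : ∀ c x, (Φ c : ℝ[X]).eval x = ∑ k, c k * x ^ (k : ℕ) := fun c x => by
    simp [eval_eq_sum_degreeLTEquiv (Φ c).2, Φ]
  obtain ⟨C, hC, hle⟩ := exists_le_mul_sq_of_homogeneous (E := Fin (p + 1) → ℝ)
    (f := fun c => ∫ x in (0 : ℝ)..1, |(Φ c : ℝ[X]).eval x|)
    (g := fun c => ∫ x in (0 : ℝ)..1, (Φ c : ℝ[X]).eval x ^ 2)
    (by simp only [hΦ]; fun_prop) (by simp only [hΦ]; fun_prop)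
    (fun c hc => integral_abs_eval_pos (by simpa [Φ] using hc) zero_lt_one)
    (fun t c => by simp [abs_mul, intervalIntegral.integral_const_mul])
    (fun t c => by simp [mul_pow, intervalIntegral.integral_const_mul])
  refine ⟨C, hC, fun v hv => ?_⟩
  have hmem : v ∈ degreeLT ℝ (p + 1) :=
    mem_degreeLT.2 ((degree_le_of_natDegree_le hv).trans_lt (by exact_mod_cast p.lt_succ_self))
  simpa [Φ] using hle (degreeLTEquiv ℝ (p + 1) ⟨v, hmem⟩)

def InverseEstimate (p : ℕ) (M : ℝ) : Prop :=
  ∀ v : ℝ[X], v.natDegree ≤ p → ∀ {α β : ℝ}, α < β →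
    ∫ x in α..β, v.eval x ^ 2 ≤ M / (β - α) * (∫ x in α..β, |v.eval x|) ^ 2

theorem exists_inverseEstimate (p : ℕ) : ∃ M, 0 < M ∧ InverseEstimate p M := by
  obtain ⟨M, hM, hunit⟩ := exists_integral_sq_le_mul_sq_unitInterval p
  refine ⟨M, hM, fun v hv α β hαβ => ?_⟩
  set L := β - α
  have hL : 0 < L := sub_pos.2 hαβ
  have hcomp : ∀ F : ℝ → ℝ, ∫ x in (0 : ℝ)..1, F (v.eval (L * x + α)) =
      L⁻¹ * ∫ x in α..β, F (v.eval x) := fun F => by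
    rw [integral_comp_mul_add (fun x => F (v.eval x)) hL.ne', smul_eq_mul]
    simp [L]
  have hw := hunit (v.comp (C L * X + C α)) ((natDegree_comp_linear_le v L α).trans hv)
  simp only [eval_comp, eval_add, eval_mul, eval_C, eval_X] at hw
  rw [hcomp (· ^ 2), hcomp (|·|)] at hw
  calc ∫ x in α..β, v.eval x ^ 2 = L * (L⁻¹ * ∫ x in α..β, v.eval x ^ 2) := by field_simp
    _ ≤ L * (M * (L⁻¹ * ∫ x in α..β, |v.eval x|) ^ 2) := by gcongr
    _ = M / L * (∫ x in α..β, |v.eval x|) ^ 2 := by field_simp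

theorem Polynomial.eval_add_eq_sum_iterate_derivative {K : Type*} [Field K] [CharZero K]
    {s : K[X]} {n : ℕ} (hs : s.natDegree ≤ n) (x y : K) :
    s.eval (x + y) = ∑ k ∈ Finset.range (n + 1), (derivative^[k] s).eval x / k ! * y ^ k := by
  rw [add_comm, ← taylor_eval, eval_eq_sum_range' (n := n + 1) (by rw [natDegree_taylor]; omega)]
  refine Finset.sum_congr rfl fun k _ => ?_
  rw [taylor_coeff, ← factorial_smul_hasseDeriv]
  simp [nsmul_eq_mul, mul_div_cancel_left₀, Nat.factorial_ne_zero]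

theorem Qform_le_Qerr (p : ℕ) (d : Fin (p + 1) → ℝ) {v : ℝ[X]} (hv : v.natDegree ≤ p) :
    Qform p d ≤ Qerr p d v := by
  refine csInf_le ⟨0, ?_⟩ ⟨v, hv, rfl⟩
  rintro _ ⟨w, -, rfl⟩
  exact add_nonneg (integral_nonneg (by norm_num) fun _ _ => sq_nonneg _)
    (integral_nonneg (by norm_num) fun _ _ => sq_nonneg _)

theorem fd_Dvec {p : ℕ} {h : ℝ} (hh : h ≠ 0) (xi : ℝ) {ql qr : ℝ[X]} (hql : ql.natDegree ≤ p)
    (hqr : qr.natDegree ≤ p) (ξ : ℝ) :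
    fd p (Dvec p h xi ql qr) ξ = (qr - ql).eval (xi + h * ξ) / (2 * h ^ (p + 1)) := by
  unfold fd Dvec
  rw [eval_add_eq_sum_iterate_derivative (natDegree_sub_le_of_natDegree_le hqr hql),
    Fin.sum_univ_eq_sum_range (fun k => ((derivative^[k] qr).eval xi -
      (derivative^[k] ql).eval xi) / h ^ (p + 1 - k) / k ! * ξ ^ k), Finset.sum_div,
    Finset.mul_sum]
  refine Finset.sum_congr rfl fun k hk => ?_
  have hk : k ≤ p + 1 := by simp at hk; omega
  rw [iterate_derivative_sub, eval_sub, ← Nat.sub_add_cancel hk, pow_add]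
  field_simp
  rw [Nat.sub_add_cancel hk]
  ring

theorem Qform_Dvec_le {p : ℕ} {h : ℝ} (hh : 0 < h) (xi : ℝ) {ql qr P : ℝ[X]}
    (hql : ql.natDegree ≤ p) (hqr : qr.natDegree ≤ p) (hP : P.natDegree ≤ p) :
    Qform p (Dvec p h xi ql qr) ≤
      ((∫ x in (xi - h / 2)..xi, (ql - P).eval x ^ 2) +
        ∫ x in xi..(xi + h / 2), (qr - P).eval x ^ 2) / h ^ (2 * p + 3) := by
  -- `v + fd` and `v - fd` are the rescaled `P - ql` and `P - qr`
  set v : ℝ[X] := C (-(2 * h ^ (p + 1))⁻¹) * (ql - P + (qr - P)).comp (C h * X + C xi)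
  have hv : v.natDegree ≤ p := (natDegree_C_mul_le _ _).trans <|
    (natDegree_comp_linear_le _ _ _).trans <| natDegree_add_le_of_degree_le
      (natDegree_sub_le_of_natDegree_le hql hP) (natDegree_sub_le_of_natDegree_le hqr hP)
  have hv_eval : ∀ ξ, v.eval ξ = -((ql - P + (qr - P)).eval (xi + h * ξ)) / (2 * h ^ (p + 1)) :=
    fun ξ => by simp [v, add_comm (h * ξ)]; ring
  have hhp : h ^ (p + 1) ≠ 0 := pow_ne_zero _ hh.ne'
  calc Qform p (Dvec p h xi ql qr) ≤ Qerr p (Dvec p h xi ql qr) v := Qform_le_Qerr _ _ hv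
    _ = (∫ ξ in (-(1 : ℝ) / 2)..0, (ql - P).eval (xi + h * ξ) ^ 2) / h ^ (2 * p + 2) +
        (∫ ξ in (0 : ℝ)..(1 / 2), (qr - P).eval (xi + h * ξ) ^ 2) / h ^ (2 * p + 2) := by
      rw [Qerr, ← intervalIntegral.integral_div, ← intervalIntegral.integral_div]
      congr 1 <;> refine integral_congr fun ξ _ => ?_ <;>
        simp only [hv_eval, fd_Dvec hh.ne' xi hql hqr, eval_add, eval_sub] <;> field_simp <;> ring
    _ = _ := by
      rw [integral_comp_add_mul (fun x => (ql - P).eval x ^ 2) hh.ne',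
        integral_comp_add_mul (fun x => (qr - P).eval x ^ 2) hh.ne', smul_eq_mul, smul_eq_mul,
        mul_zero, add_zero, show xi + h * (-1 / 2) = xi - h / 2 by ring,
        show xi + h * (1 / 2) = xi + h / 2 by ring]
      field_simp
      ring

theorem mul_sqrt_Qform_Dvec_le {p : ℕ} {M : ℝ} (hM : 0 ≤ M) (hinv : InverseEstimate p M)
    {h : ℝ} (hh : 0 < h) (xi : ℝ) {ql qr P : ℝ[X]}
    (hql : ql.natDegree ≤ p) (hqr : qr.natDegree ≤ p) (hP : P.natDegree ≤ p) :
    h * √(Qform p (Dvec p h xi ql qr)) ≤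
      √(2 * M) * (((∫ x in (xi - h / 2)..xi, |(ql - P).eval x|) +
        ∫ x in xi..(xi + h / 2), |(qr - P).eval x|) / h ^ (p + 1)) := by
  set Al := ∫ x in (xi - h / 2)..xi, |(ql - P).eval x|
  set Ar := ∫ x in xi..(xi + h / 2), |(qr - P).eval x|
  have hAl : 0 ≤ Al := integral_nonneg (by linarith) fun _ _ => abs_nonneg _
  have hAr : 0 ≤ Ar := integral_nonneg (by linarith) fun _ _ => abs_nonneg _
  have hl := hinv (ql - P) (natDegree_sub_le_of_natDegree_le hql hP)
    (show xi - h / 2 < xi by linarith)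
  have hr := hinv (qr - P) (natDegree_sub_le_of_natDegree_le hqr hP)
    (show xi < xi + h / 2 by linarith)
  rw [show xi - (xi - h / 2) = h / 2 by ring] at hl
  rw [show xi + h / 2 - xi = h / 2 by ring] at hr
  have hQ : Qform p (Dvec p h xi ql qr) ≤ (√(2 * M) * ((Al + Ar) / h ^ (p + 1)) / h) ^ 2 :=
    calc Qform p (Dvec p h xi ql qr)
        ≤ (M / (h / 2) * Al ^ 2 + M / (h / 2) * Ar ^ 2) / h ^ (2 * p + 3) :=
          (Qform_Dvec_le hh xi hql hqr hP).trans (by gcongr)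
      _ ≤ 2 * M * (Al + Ar) ^ 2 / h / h ^ (2 * p + 3) := by
          have hsq : Al ^ 2 + Ar ^ 2 ≤ (Al + Ar) ^ 2 := by nlinarith [mul_nonneg hAl hAr]
          gcongr
          calc M / (h / 2) * Al ^ 2 + M / (h / 2) * Ar ^ 2 = 2 * M / h * (Al ^ 2 + Ar ^ 2) := by
                field_simp
            _ ≤ 2 * M / h * (Al + Ar) ^ 2 := by gcongr
            _ = 2 * M * (Al + Ar) ^ 2 / h := by ring
      _ = _ := by
          rw [div_pow, mul_pow, Real.sq_sqrt (by positivity)]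
          field_simp
          ring
  rw [mul_comm, ← le_div_iff₀ hh]
  exact Real.sqrt_le_iff.2 ⟨by positivity, hQ⟩

section Taylor

variable {F : Type*} [NormedAddCommGroup F] [NormedSpace ℝ F] {f : ℝ → F} {s t : Set ℝ}

theorem iteratedDerivWithin_eq_of_subset {k : ℕ} (hst : s ⊆ t) (hs : UniqueDiffOn ℝ s)
    (ht : UniqueDiffOn ℝ t) (hf : ContDiffOn ℝ k f t) {x : ℝ} (hx : x ∈ s) :
    iteratedDerivWithin k f s x = iteratedDerivWithin k f t x := by
  simp only [iteratedDerivWithin_eq_iteratedFDerivWithin,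
    iteratedFDerivWithin_subset hst hs ht hf hx]

theorem taylorWithinEval_eq_of_subset {n : ℕ} (hst : s ⊆ t) (hs : UniqueDiffOn ℝ s)
    (ht : UniqueDiffOn ℝ t) (hf : ContDiffOn ℝ n f t) {x₀ : ℝ} (hx₀ : x₀ ∈ s) (x : ℝ) :
    taylorWithinEval f n s x₀ x = taylorWithinEval f n t x₀ x := by
  simp only [taylor_within_apply]
  refine Finset.sum_congr rfl fun k hk => ?_
  rw [iteratedDerivWithin_eq_of_subset hst hs ht
    (hf.of_le (by exact_mod_cast Finset.mem_range_succ_iff.1 hk)) hx₀]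

-- `taylor_integral_remainder` differentiates within `uIcc x₀ x`; here within any `s ⊇ uIcc x₀ x`.
theorem taylor_integral_remainder_of_subset [CompleteSpace F] {n : ℕ}
    (hf : ContDiffOn ℝ (n + 1 : ℕ) f s) (hs : UniqueDiffOn ℝ s) {x₀ x : ℝ}
    (hsub : uIcc x₀ x ⊆ s) :
    f x - taylorWithinEval f n s x₀ x =
      ∫ t in x₀..x, ((x - t) ^ n / n !) • iteratedDerivWithin (n + 1) f s t := by
  rcases eq_or_ne x₀ x with rfl | hne
  · simp [taylorWithinEval_self]
  have hu := uniqueDiffOn_uIcc hne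
  rw [← taylorWithinEval_eq_of_subset hsub hu hs (hf.of_le (by exact_mod_cast n.le_succ))
    left_mem_uIcc, taylor_integral_remainder (hf.mono hsub)]
  exact integral_congr fun t ht => by rw [iteratedDerivWithin_eq_of_subset hsub hu hs hf ht]

end Taylor

theorem abs_sub_taylorWithinEval_le {f : ℝ → ℝ} {s : Set ℝ} {n : ℕ}
    (hf : ContDiffOn ℝ (n + 1 : ℕ) f s) (hs : UniqueDiffOn ℝ s) {c δ x : ℝ}
    (hsub : Icc (c - δ) (c + δ) ⊆ s) (hx : |x - c| ≤ δ) :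
    |f x - taylorWithinEval f n s c x| ≤
      δ ^ n / n ! * ∫ t in (c - δ)..(c + δ), |iteratedDerivWithin (n + 1) f s t| := by
  set D := iteratedDerivWithin (n + 1) f s
  have hδ : 0 ≤ δ := (abs_nonneg _).trans hx
  have hxI : x ∈ Icc (c - δ) (c + δ) := by constructor <;> linarith [abs_le.1 hx]
  have hI : uIcc (c - δ) (c + δ) = Icc (c - δ) (c + δ) := uIcc_of_le (by linarith)
  have hcx : uIcc c x ⊆ uIcc (c - δ) (c + δ) :=
    hI ▸ uIcc_subset_Icc ⟨by linarith, by linarith⟩ hxI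
  have hD : IntervalIntegrable (fun t => |D t|) volume (c - δ) (c + δ) :=
    ContinuousOn.intervalIntegrable <| hI ▸
      ((hf.continuousOn_iteratedDerivWithin le_rfl hs).mono hsub).abs
  rw [taylor_integral_remainder_of_subset hf hs (hcx.trans (hI.subset.trans hsub))]
  calc |∫ t in c..x, ((x - t) ^ n / n !) • D t|
      ≤ |(∫ t in c..x, δ ^ n / n ! * |D t|)| := by
        rw [← Real.norm_eq_abs]
        refine norm_integral_le_abs_of_norm_le
          (ae_restrict_of_forall_mem measurableSet_uIoc fun t ht => ?_)
          ((hD.mono_set (uIcc_subset_uIcc ?_ ?_)).const_mul _)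
        · rw [Real.norm_eq_abs, smul_eq_mul, abs_mul, abs_div, abs_pow, Nat.abs_cast]
          gcongr
          exact (abs_sub_right_of_mem_uIcc (uIoc_subset_uIcc ht)).trans hx
        · exact hcx left_mem_uIcc
        · exact hcx right_mem_uIcc
    _ = δ ^ n / n ! * |(∫ t in c..x, |D t|)| := by
        rw [intervalIntegral.integral_const_mul, abs_mul, abs_of_nonneg (by positivity)]
    _ ≤ δ ^ n / n ! * ∫ t in (c - δ)..(c + δ), |D t| := by
        gcongr
        refine (abs_integral_mono_interval ?_ (ae_of_all _ fun _ => abs_nonneg _) hD).trans_eq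
          (abs_of_nonneg (integral_nonneg (by linarith) fun _ _ => abs_nonneg _))
        exact uIoc_subset_uIoc_of_uIcc_subset_uIcc hcx

noncomputable def taylorPolynomial (f : ℝ → ℝ) (n : ℕ) (s : Set ℝ) (x₀ : ℝ) : ℝ[X] :=
  ∑ k ∈ Finset.range (n + 1), C (iteratedDerivWithin k f s x₀ / k !) * (X - C x₀) ^ k

theorem natDegree_taylorPolynomial_le (f : ℝ → ℝ) (n : ℕ) (s : Set ℝ) (x₀ : ℝ) :
    (taylorPolynomial f n s x₀).natDegree ≤ n :=
  natDegree_sum_le_of_forall_le _ _ fun k hk => (natDegree_C_mul_le _ _).trans <|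
    natDegree_pow_le.trans <| by
      rw [natDegree_X_sub_C, mul_one]
      exact Finset.mem_range_succ_iff.1 hk

theorem eval_taylorPolynomial (f : ℝ → ℝ) (n : ℕ) (s : Set ℝ) (x₀ x : ℝ) :
    (taylorPolynomial f n s x₀).eval x = taylorWithinEval f n s x₀ x := by
  simp only [taylorPolynomial, taylor_within_apply, eval_finsetSum, eval_mul, eval_C, eval_pow,
    eval_sub, eval_X, smul_eq_mul]
  exact Finset.sum_congr rfl fun k _ => by ring

theorem integral_abs_sub_taylorPolynomial_le {u : ℝ → ℝ} {s : Set ℝ} {p : ℕ}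
    (hu : ContDiffOn ℝ (p + 1 : ℕ) u s) (hs : UniqueDiffOn ℝ s) {c δ : ℝ} (hδ : 0 ≤ δ)
    (hsub : Icc (c - δ) (c + δ) ⊆ s) :
    ∫ x in (c - δ)..(c + δ), |u x - (taylorPolynomial u p s c).eval x| ≤
      (2 * δ) ^ (p + 1) * ∫ t in (c - δ)..(c + δ), |iteratedDerivWithin (p + 1) u s t| := by
  set T := ∫ t in (c - δ)..(c + δ), |iteratedDerivWithin (p + 1) u s t|
  have hT : 0 ≤ T := integral_nonneg (by linarith) fun _ _ => abs_nonneg _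
  calc ∫ x in (c - δ)..(c + δ), |u x - (taylorPolynomial u p s c).eval x|
      ≤ δ ^ p / p ! * T * |c + δ - (c - δ)| := by
        refine (Real.le_norm_self _).trans
          (intervalIntegral.norm_integral_le_of_norm_le_const fun x hx => ?_)
        rw [uIoc_of_le (by linarith)] at hx
        rw [Real.norm_eq_abs, abs_abs, eval_taylorPolynomial]
        exact abs_sub_taylorWithinEval_le hu hs hsub
          (abs_le.2 ⟨by linarith [hx.1], by linarith [hx.2]⟩)
    _ ≤ (2 * δ) ^ p * T * (2 * δ) := by
        rw [show c + δ - (c - δ) = 2 * δ by ring, abs_of_nonneg (by linarith)]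
        gcongr
        exact (div_le_self (by positivity) (by exact_mod_cast p.factorial_pos)).trans
          (pow_le_pow_left₀ hδ (by linarith) p)
    _ = (2 * δ) ^ (p + 1) * T := by ring

theorem mul_sqrt_Qform_Dvec_le_of_contDiffOn {p : ℕ} {M : ℝ} (hM : 0 ≤ M)
    (hinv : InverseEstimate p M) {u : ℝ → ℝ} {s : Set ℝ} (hu : ContDiffOn ℝ (p + 1 : ℕ) u s)
    (hs : UniqueDiffOn ℝ s) {h xi : ℝ} (hh : 0 < h) (hsub : Icc (xi - h / 2) (xi + h / 2) ⊆ s)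
    {ql qr : ℝ[X]} (hql : ql.natDegree ≤ p) (hqr : qr.natDegree ≤ p) :
    h * √(Qform p (Dvec p h xi ql qr)) ≤
      √(2 * M) * (((∫ x in (xi - h / 2)..xi, |u x - ql.eval x|) +
        ∫ x in xi..(xi + h / 2), |u x - qr.eval x|) / h ^ (p + 1) +
        ∫ x in (xi - h / 2)..(xi + h / 2), |iteratedDerivWithin (p + 1) u s x|) := by
  set P := taylorPolynomial u p s xi
  set T := ∫ x in (xi - h / 2)..(xi + h / 2), |iteratedDerivWithin (p + 1) u s x|
  have hint : ∀ (g : ℝ[X]) {α β : ℝ}, xi - h / 2 ≤ α → α ≤ β → β ≤ xi + h / 2 →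
      IntervalIntegrable (fun x => |u x - g.eval x|) volume α β := fun g α β h₁ h₂ h₃ =>
    (((hu.continuousOn.mono hsub).sub g.continuous.continuousOn).abs.mono
      (by rw [uIcc_of_le h₂]; exact Icc_subset_Icc h₁ h₃)).intervalIntegrable
  have htri : ∀ (g : ℝ[X]) {α β : ℝ}, xi - h / 2 ≤ α → α ≤ β → β ≤ xi + h / 2 →
      ∫ x in α..β, |(g - P).eval x| ≤
        (∫ x in α..β, |u x - g.eval x|) + ∫ x in α..β, |u x - P.eval x| := by
    intro g α β h₁ h₂ h₃
    rw [← integral_add (hint g h₁ h₂ h₃) (hint P h₁ h₂ h₃)]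
    refine integral_mono_on h₂ (Continuous.intervalIntegrable (by fun_prop) _ _)
      ((hint g h₁ h₂ h₃).add (hint P h₁ h₂ h₃)) fun x _ => ?_
    rw [eval_sub, abs_sub_comm (u x)]
    exact abs_sub_le _ _ _
  have hsplit := integral_add_adjacent_intervals
    (hint P (β := xi) le_rfl (by linarith) (by linarith))
    (hint P (by linarith) (by linarith) le_rfl)
  have htay := integral_abs_sub_taylorPolynomial_le (p := p) hu hs (δ := h / 2) (by linarith) hsub
  rw [show 2 * (h / 2) = h by ring] at htay
  calc h * √(Qform p (Dvec p h xi ql qr))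
      ≤ √(2 * M) * (((∫ x in (xi - h / 2)..xi, |(ql - P).eval x|) +
          ∫ x in xi..(xi + h / 2), |(qr - P).eval x|) / h ^ (p + 1)) :=
        mul_sqrt_Qform_Dvec_le hM hinv hh xi hql hqr (natDegree_taylorPolynomial_le _ _ _ _)
    _ ≤ √(2 * M) * (((∫ x in (xi - h / 2)..xi, |u x - ql.eval x|) +
          (∫ x in xi..(xi + h / 2), |u x - qr.eval x|) + h ^ (p + 1) * T) / h ^ (p + 1)) := by
        gcongr √(2 * M) * (?_ / _)
        linarith [htri ql (β := xi) le_rfl (by linarith) (by linarith),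
          htri qr (α := xi) (by linarith) (by linarith) le_rfl]
    _ = _ := by field_simp

theorem sum_integral_dualCells_le {f : ℝ → ℝ} {a h : ℝ} {N : ℕ} (hh : 0 ≤ h) (hf₀ : ∀ x, 0 ≤ f x)
    (hf : IntervalIntegrable f volume a (a + N * h)) :
    ∑ i ∈ Finset.Ico 1 N, ∫ x in (a + i * h - h / 2)..(a + i * h + h / 2), f x ≤
      ∫ x in a..(a + N * h), f x := by
  rcases Nat.eq_zero_or_pos N with rfl | hN
  · simp
  set y : ℕ → ℝ := fun k => a + k * h - h / 2
  have hy : ∀ k : ℕ, a + k * h + h / 2 = y (k + 1) := fun k => by simp only [y]; push_cast; ring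
  have hmono : Monotone y := fun k l hkl => by
    simp only [y]
    gcongr
  have hN1 : (1 : ℝ) ≤ N := by exact_mod_cast hN
  have hyN : y N ≤ a + N * h := by simp only [y]; linarith
  have hy1 : a ≤ y 1 := by simp only [y]; push_cast; linarith
  rw [Finset.sum_congr rfl fun k _ => by rw [hy k],
    sum_integral_adjacent_intervals_Ico hN fun k hk => hf.mono_set ?_]
  · exact integral_mono_interval hy1 (hmono hN) hyN (ae_of_all _ hf₀) hf
  · obtain ⟨hk1, hkN⟩ := hk
    rw [uIcc_of_le (hmono k.le_succ), uIcc_of_le (by nlinarith)]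
    exact Icc_subset_Icc (hy1.trans (hmono hk1)) ((hmono hkN).trans hyN)

theorem intervalIntegrable_abs_sub_of_eqOn_cells {u uR : ℝ → ℝ} {q : ℕ → ℝ[X]} {a h : ℝ}
    {N : ℕ} (hh : 0 ≤ h) (hu : ContinuousOn u (Icc a (a + N * h)))
    (huR : ∀ i < N, ∀ x ∈ Ioo (a + i * h) (a + (i + 1) * h), uR x = (q i).eval x) :
    IntervalIntegrable (fun x => |u x - uR x|) volume a (a + N * h) := by
  have := IntervalIntegrable.trans_iterate (a := fun k : ℕ => a + k * h) (n := N)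
    (f := fun x => |u x - uR x|) (μ := volume) fun k hk => ?_
  · simpa using this
  have hk' : (k : ℝ) + 1 ≤ N := by exact_mod_cast hk
  have hkh : a + k * h ≤ a + (k + 1 : ℕ) * h := by gcongr; simp
  refine IntervalIntegrable.congr_uIoo (f := fun x => |u x - (q k).eval x|)
    (ContinuousOn.intervalIntegrable ?_) fun x hx => ?_
  · rw [uIcc_of_le hkh]
    refine ((hu.mono (Icc_subset_Icc ?_ ?_)).sub (q k).continuous.continuousOn).abs
    · nlinarith
    · push_cast; nlinarith
  · rw [uIoo_of_le hkh] at hx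
    simp only [huR k hk x (by simpa using hx)]

theorem mul_sqrt_Qform_Dvec_le_of_eqOn_cells {p : ℕ} {M : ℝ} (hM : 0 ≤ M)
    (hinv : InverseEstimate p M) {u uR : ℝ → ℝ} {q : ℕ → ℝ[X]} {a h : ℝ} {N : ℕ} (hh : 0 < h)
    (hu : ContDiffOn ℝ (p + 1 : ℕ) u (Icc a (a + N * h))) (hq : ∀ i < N, (q i).natDegree ≤ p)
    (huR : ∀ i < N, ∀ x ∈ Ioo (a + i * h) (a + (i + 1) * h), uR x = (q i).eval x)
    {i : ℕ} (hi1 : 1 ≤ i) (hiN : i < N) :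
    h * √(Qform p (Dvec p h (a + i * h) (q (i - 1)) (q i))) ≤
      √(2 * M) * ((∫ x in (a + i * h - h / 2)..(a + i * h + h / 2), |u x - uR x|) /
        h ^ (p + 1) + ∫ x in (a + i * h - h / 2)..(a + i * h + h / 2),
          |iteratedDerivWithin (p + 1) u (Icc a (a + N * h)) x|) := by
  have hi1' : (1 : ℝ) ≤ i := by exact_mod_cast hi1
  have hiN' : (i : ℝ) + 1 ≤ N := by exact_mod_cast hiN
  have hab : a < a + N * h := by nlinarith
  have hF := intervalIntegrable_abs_sub_of_eqOn_cells hh.le hu.continuousOn huR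
  have hsub : ∀ {α β : ℝ}, a ≤ α → α ≤ β → β ≤ a + N * h →
      uIcc α β ⊆ uIcc a (a + N * h) := fun h₁ h₂ h₃ => by
    rw [uIcc_of_le h₂, uIcc_of_le hab.le]
    exact Icc_subset_Icc h₁ h₃
  have hL : ∫ x in (a + i * h - h / 2)..(a + i * h), |u x - (q (i - 1)).eval x| =
      ∫ x in (a + i * h - h / 2)..(a + i * h), |u x - uR x| :=
    integral_congr_Ioo_of_le (by linarith) fun x hx => by
      rw [huR (i - 1) (by omega) x ⟨by push_cast [hi1]; linarith [hx.1], by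
        push_cast [hi1]; linarith [hx.2]⟩]
  have hR : ∫ x in (a + i * h)..(a + i * h + h / 2), |u x - (q i).eval x| =
      ∫ x in (a + i * h)..(a + i * h + h / 2), |u x - uR x| :=
    integral_congr_Ioo_of_le (by linarith) fun x hx => by
      rw [huR i hiN x ⟨hx.1, by linarith [hx.2]⟩]
  have hsplit := integral_add_adjacent_intervals
    (hF.mono_set (hsub (α := a + i * h - h / 2) (β := a + i * h) (by nlinarith) (by linarith)
      (by nlinarith)))
    (hF.mono_set (hsub (α := a + i * h) (β := a + i * h + h / 2) (by nlinarith) (by linarith)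
      (by nlinarith)))
  have := mul_sqrt_Qform_Dvec_le_of_contDiffOn hM hinv hu (uniqueDiffOn_Icc hab) hh
    (xi := a + i * h) (Icc_subset_Icc (by nlinarith) (by nlinarith)) (hq (i - 1) (by omega))
    (hq i hiN)
  rwa [hL, hR, hsplit] at this

/-- necessity of numerical `W^{p+1}_1`-smoothness: if
`‖u - u^R‖_{L¹} ≤ K h^{p+1}` then `Σᵢ h √(Q(Dᵢ)) ≤ (1/C₁₂)(K + C₁ |u|_{W^{p+1}_1})`. -/
theorem necessity_W1_smoothness (p : ℕ) :
    ∃ C₁ C₁₂ : ℝ, 0 < C₁ ∧ 0 < C₁₂ ∧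
      ∀ (a b : ℝ), a < b → ∀ N : ℕ, 0 < N → ∀ h : ℝ, h = (b - a) / N →
      ∀ u : ℝ → ℝ, ContDiffOn ℝ (p+1) u (Set.Icc a b) →
      ∀ (uR : ℝ → ℝ) (q : ℕ → Polynomial ℝ),
        (∀ i < N, (q i).natDegree ≤ p) →
        (∀ i < N, ∀ x ∈ Set.Ioo (a + i*h) (a + (i+1)*h), uR x = (q i).eval x) →
        ∀ K : ℝ, 0 ≤ K →
          (∫ x in a..b, |u x - uR x|) ≤ K * h^(p+1) →
          (∑ i ∈ Finset.Ico 1 N,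
              h * Real.sqrt (Qform p (Dvec p h (a + i*h) (q (i-1)) (q i)))) ≤
            (1 / C₁₂) *
              (K + C₁ * ∫ x in a..b,
                  |iteratedDerivWithin (p+1) u (Set.Icc a b) x|) := by
  obtain ⟨M, hM, hinv⟩ := exists_inverseEstimate p
  refine ⟨1, (√(2 * M))⁻¹, one_pos, by positivity, ?_⟩
  intro a b hab N hN h hhN u hu uR q hq huR K hK hKb
  have hh : 0 < h := hhN ▸ div_pos (sub_pos.2 hab) (Nat.cast_pos.2 hN)
  obtain rfl : b = a + N * h := by rw [hhN]; field_simp; ring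
  have hu' : ContDiffOn ℝ (p + 1 : ℕ) u (Icc a (a + N * h)) := by exact_mod_cast hu
  set D := fun x => |iteratedDerivWithin (p + 1) u (Icc a (a + N * h)) x|
  have hD : IntervalIntegrable D volume a (a + N * h) := by
    apply ContinuousOn.intervalIntegrable
    rw [uIcc_of_le hab.le]
    exact (hu'.continuousOn_iteratedDerivWithin le_rfl (uniqueDiffOn_Icc hab)).abs
  calc _ ≤ ∑ i ∈ Finset.Ico 1 N, √(2 * M) *
        ((∫ x in (a + i * h - h / 2)..(a + i * h + h / 2), |u x - uR x|) / h ^ (p + 1) +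
          ∫ x in (a + i * h - h / 2)..(a + i * h + h / 2), D x) :=
        Finset.sum_le_sum fun i hi => mul_sqrt_Qform_Dvec_le_of_eqOn_cells hM.le hinv hh hu' hq
          huR (Finset.mem_Ico.1 hi).1 (Finset.mem_Ico.1 hi).2
    _ ≤ √(2 * M) * (K * h ^ (p + 1) / h ^ (p + 1) + ∫ x in a..(a + N * h), D x) := by
      rw [← Finset.mul_sum, Finset.sum_add_distrib, ← Finset.sum_div]
      gcongr
      · exact (sum_integral_dualCells_le hh.le (fun _ => abs_nonneg _)
          (intervalIntegrable_abs_sub_of_eqOn_cells hh.le hu.continuousOn huR)).trans hKb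
      · exact sum_integral_dualCells_le hh.le (fun _ => abs_nonneg _) hD
    _ = _ := by field_simp
end
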